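/- arXiv:1711.07524 — 2 statements merged into one kernel-verified Lean document; each statement's English description precedes it below -/
import Mathlib

section
/- For every odd integer n ≥ 3, P(n,n) ≥ ⌊3n/2⌋ − 1. -/
/-- Two permutations of `[n]` (written as sequences `π 0, π 1, …, π (n-1)`) are
`k`-neighbor separated: there are two elements occupying adjacent positions in one of
them whose positions in the other differ by exactly `k - 1`. -/
def NeighborSep (n k : ℕ) (π σ : Equiv.Perm (Fin n)) : Prop :=
  ∃ x y : Fin n,
    (((π.symm x : ℤ) - (π.symm y : ℤ)).natAbs = 1 ∧
      ((σ.symm x : ℤ) - (σ.symm y : ℤ)).natAbs = k - 1) ∨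
    (((σ.symm x : ℤ) - (σ.symm y : ℤ)).natAbs = 1 ∧
      ((π.symm x : ℤ) - (π.symm y : ℤ)).natAbs = k - 1)

/-- `permP n k`: the maximum size of a family of permutations of `[n]` that are
pairwise `k`-neighbor separated. -/
noncomputable def permP (n k : ℕ) : ℕ :=
  sSup {m : ℕ | ∃ F : Finset (Equiv.Perm (Fin n)),
    (F : Set (Equiv.Perm (Fin n))).Pairwise (NeighborSep n k) ∧ F.card = m}

/-!
Read a permutation as a cyclic word cut open at one place. Two permutations are
`n`-neighbor separated as soon as the two end elements of one are adjacent in the other, so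
two different cuts of the same cyclic word are always separated.

For `n = 2m + 1` let `F a = {{a + i, a - i}}` be the near-perfect matchings of `ℤ/n`. The union
of `F 0` and `F 1` closes up to the cyclic word `A = 0, 2, -2, 4, -4, …, 2m, -2m`; then
`B = A + 1` is made of `F 1` and `F 2`, and `C = 2 A` of `F 0` and `F 2`. Cutting `A` at its
`m` edges from `F 1`, `B` at those from `F 2` and `C` at those from `F 0` gives `3m`
permutations: the end pair of a cut of `A` is an edge of `B`, that of a cut of `B` an edge
of `C`, that of a cut of `C` an edge of `A`, and never the edge cut there.
-/

namespace NeighborSep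

variable {n k : ℕ} {π σ : Equiv.Perm (Fin n)}

theorem symm (h : NeighborSep n k π σ) : NeighborSep n k σ π :=
  let ⟨x, y, h⟩ := h
  ⟨x, y, h.symm⟩

theorem irrefl (hk : k ≠ 2) : ¬ NeighborSep n k π π := by
  rintro ⟨x, y, ⟨h₁, h₂⟩ | ⟨h₁, h₂⟩⟩ <;> omega

end NeighborSep

theorem le_permP {n k : ℕ} {F : Finset (Equiv.Perm (Fin n))}
    (hF : (F : Set (Equiv.Perm (Fin n))).Pairwise (NeighborSep n k)) : F.card ≤ permP n k :=
  le_csSup ⟨Fintype.card (Equiv.Perm (Fin n)), by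
    rintro _ ⟨G, -, rfl⟩
    exact G.card_le_univ⟩ ⟨F, hF, rfl⟩

section CyclicWord

variable {n : ℕ}

/-- The word `c s, c (s + 1), …, c (s - 1)`: the cyclic word `c` cut open between positions
`s - 1` and `s`. -/
def cutAt (c : Equiv.Perm (Fin (n + 1))) (s : Fin (n + 1)) : Equiv.Perm (Fin (n + 1)) :=
  (Equiv.addRight s).trans c

theorem cutAt_symm_apply (c : Equiv.Perm (Fin (n + 1))) (s a : Fin (n + 1)) :
    (cutAt c s).symm (c a) = a - s := by
  simp [cutAt, sub_eq_add_neg]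

theorem Fin.val_add_one_sub_of_ne {a s : Fin (n + 1)} (h : a + 1 ≠ s) :
    ((a + 1 - s : Fin (n + 1)) : ℕ) = (a - s : Fin (n + 1)) + 1 := by
  have hshift : a + 1 - s = a - s + 1 := by abel
  rw [hshift, Fin.val_add_one, if_neg]
  intro hlast
  exact h (sub_eq_zero.mp (by rw [hshift, hlast, Fin.last_add_one]))

theorem neighborSep_cutAt {c d : Equiv.Perm (Fin (n + 1))} {s t a b u : Fin (n + 1)}
    (hab : a + 1 = b) (hut : u + 1 = t) (hs : b ≠ s) (h : s(c a, c b) = s(d u, d t)) :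
    NeighborSep (n + 1) (n + 1) (cutAt c s) (cutAt d t) := by
  subst hab hut
  have hπ : ((cutAt c s).symm (c (a + 1)) : ℕ) = ((cutAt c s).symm (c a) : ℕ) + 1 := by
    rw [cutAt_symm_apply, cutAt_symm_apply, Fin.val_add_one_sub_of_ne hs]
  have hσ₁ : ((cutAt d (u + 1)).symm (d u) : ℕ) = n := by
    rw [cutAt_symm_apply, sub_add_cancel_left, Fin.coe_neg_one]
  have hσ₂ : ((cutAt d (u + 1)).symm (d (u + 1)) : ℕ) = 0 := by
    rw [cutAt_symm_apply, sub_self, Fin.val_zero]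
  refine ⟨c a, c (a + 1), Or.inl ?_⟩
  rcases Sym2.eq_iff.mp h with ⟨h₁, h₂⟩ | ⟨h₁, h₂⟩ <;> rw [h₁, h₂] at hπ ⊢ <;> omega

theorem neighborSep_cutAt_of_ne (c : Equiv.Perm (Fin (n + 1))) {s t : Fin (n + 1)} (h : t ≠ s) :
    NeighborSep (n + 1) (n + 1) (cutAt c s) (cutAt c t) :=
  neighborSep_cutAt (sub_add_cancel _ 1) (sub_add_cancel _ 1) h rfl

end CyclicWord

open Fin.CommRing in
theorem Fin.natCast_ne_natCast_of_lt {n a b : ℕ} [NeZero n] (ha : a < n) (hb : b < n)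
    (h : a ≠ b) : (a : Fin n) ≠ b := by
  intro e
  apply h
  simpa [Fin.val_cast_of_lt ha, Fin.val_cast_of_lt hb] using congrArg Fin.val e

namespace ZigzagFamily

open Fin.CommRing

variable {m : ℕ}

/-- The cyclic word `0, 2, -2, 4, -4, …, 2m, -2m` of `ℤ/(2m+1)`. -/
def zigzagFun (q : Fin (2 * m + 1)) : Fin (2 * m + 1) := if Even (q : ℕ) then -q else q + 1

theorem zigzagFun_injective : Function.Injective (zigzagFun (m := m)) := by
  have hval : ∀ q : Fin (2 * m + 1), ¬ Even (q : ℕ) →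
      ((q + 1 : Fin (2 * m + 1)) : ℕ) = q + 1 := by
    intro q hq
    rw [Fin.val_add_one, if_neg]
    rintro rfl
    exact hq (by simp)
  have hmix : ∀ q q' : Fin (2 * m + 1), Even (q : ℕ) → ¬ Even (q' : ℕ) → -q ≠ q' + 1 := by
    intro q q' hq hq' h
    have := congrArg Fin.val h
    rw [Fin.val_neg, hval q' hq'] at this
    rw [Nat.even_iff] at hq
    rw [Nat.not_even_iff_odd, Nat.odd_iff] at hq'
    split_ifs at this
    omega
  intro q q' h
  unfold zigzagFun at h
  split_ifs at h with hq hq' hq'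
  · exact neg_inj.mp h
  · exact absurd h (hmix q q' hq hq')
  · exact absurd h.symm (hmix q' q hq' hq)
  · exact add_right_cancel h

noncomputable def zigzag : Equiv.Perm (Fin (2 * m + 1)) :=
  Equiv.ofBijective zigzagFun (Finite.injective_iff_bijective.mp zigzagFun_injective)

theorem zigzag_two_mul {k : ℕ} (hk : k ≤ m) :
    zigzag ((2 * k : ℕ) : Fin (2 * m + 1)) = -((2 * k : ℕ) : Fin (2 * m + 1)) := by
  show zigzagFun _ = _
  rw [zigzagFun, if_pos (by rw [Fin.val_cast_of_lt (by omega)]; exact even_two_mul k)]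

theorem zigzag_two_mul_add_one {k : ℕ} (hk : k < m) :
    zigzag ((2 * k + 1 : ℕ) : Fin (2 * m + 1)) = ((2 * k + 2 : ℕ) : Fin (2 * m + 1)) := by
  show zigzagFun _ = _
  rw [zigzagFun, if_neg]
  · push_cast; ring
  · rw [Fin.val_cast_of_lt (by omega)]
    exact Nat.not_even_iff_odd.mpr (odd_two_mul_add_one k)

def doubling : Equiv.Perm (Fin (2 * m + 1)) where
  toFun x := 2 * x
  invFun x := (m + 1 : ℕ) * x
  left_inv x := by
    have h := Fin.natCast_self (2 * m + 1)
    push_cast at h ⊢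
    linear_combination x * h
  right_inv x := by
    have h := Fin.natCast_self (2 * m + 1)
    push_cast at h ⊢
    linear_combination x * h

theorem doubling_apply (x : Fin (2 * m + 1)) : doubling x = 2 * x := rfl

/-- Cutting at `2k + 1` opens the edge at positions `2k, 2k + 1`, which lies in `F 1` for
`A = zigzag` and in `F 2` for `B = A + 1`; cutting `C = 2 A` at `2k + 2` opens an edge of `F 0`. -/
noncomputable def member : Fin 3 → ℕ → Equiv.Perm (Fin (2 * m + 1))
  | 0, k => cutAt zigzag ((2 * k + 1 : ℕ) : Fin (2 * m + 1))
  | 1, k => cutAt (zigzag.trans (Equiv.addRight 1)) ((2 * k + 1 : ℕ) : Fin (2 * m + 1))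
  | 2, k => cutAt (zigzag.trans doubling) ((2 * (k + 1) : ℕ) : Fin (2 * m + 1))

theorem neighborSep_member_one_zero {k l : ℕ} (hk : k < m) (hl : l < m) :
    NeighborSep (2 * m + 1) (2 * m + 1) (member 1 l) (member 0 k) := by
  obtain ⟨i, rfl⟩ : ∃ i, m = i + k + 1 := ⟨m - k - 1, by omega⟩
  have h0 := Fin.natCast_self (2 * (i + k + 1) + 1)
  refine neighborSep_cutAt (a := ((2 * i + 1 : ℕ) : Fin _)) (b := ((2 * (i + 1) : ℕ) : Fin _))
    (u := ((2 * k : ℕ) : Fin _)) (by push_cast; ring) (by push_cast; ring)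
    (Fin.natCast_ne_natCast_of_lt (by omega) (by omega) (by omega)) ?_
  simp only [Equiv.trans_apply, Equiv.coe_addRight,
    zigzag_two_mul_add_one (by omega : i < i + k + 1),
    zigzag_two_mul (by omega : i + 1 ≤ i + k + 1),
    zigzag_two_mul_add_one hk, zigzag_two_mul hk.le]
  push_cast at h0 ⊢
  rw [Sym2.eq_iff]
  left
  constructor
  · linear_combination h0
  · linear_combination -h0

theorem neighborSep_member_two_one {k l : ℕ} (hk : k < m) (hl : l < m) :
    NeighborSep (2 * m + 1) (2 * m + 1) (member 2 l) (member 1 k) := by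
  obtain ⟨r, rfl | rfl⟩ : ∃ r, m = k + 2 * r + 2 ∨ m = k + 2 * r + 1 := by
    rcases Nat.even_or_odd' (m - k - 1) with ⟨r, hr | hr⟩
    · exact ⟨r, Or.inr (by omega)⟩
    · exact ⟨r, Or.inl (by omega)⟩
  · have h0 := Fin.natCast_self (2 * (k + 2 * r + 2) + 1)
    refine neighborSep_cutAt (a := ((2 * (k + r + 1) : ℕ) : Fin _))
      (b := ((2 * (k + r + 1) + 1 : ℕ) : Fin _)) (u := ((2 * k : ℕ) : Fin _))
      (by push_cast; ring) (by push_cast; ring)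
      (Fin.natCast_ne_natCast_of_lt (by omega) (by omega) (by omega)) ?_
    simp only [Equiv.trans_apply, Equiv.coe_addRight, doubling_apply,
      zigzag_two_mul_add_one (by omega : k + r + 1 < k + 2 * r + 2),
      zigzag_two_mul (by omega : k + r + 1 ≤ k + 2 * r + 2),
      zigzag_two_mul_add_one hk, zigzag_two_mul hk.le]
    push_cast at h0 ⊢
    rw [Sym2.eq_iff]
    left
    constructor
    · linear_combination -h0
    · linear_combination h0
  · have h0 := Fin.natCast_self (2 * (k + 2 * r + 1) + 1)
    refine neighborSep_cutAt (a := ((2 * r : ℕ) : Fin _))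
      (b := ((2 * r + 1 : ℕ) : Fin _)) (u := ((2 * k : ℕ) : Fin _))
      (by push_cast; ring) (by push_cast; ring)
      (Fin.natCast_ne_natCast_of_lt (by omega) (by omega) (by omega)) ?_
    simp only [Equiv.trans_apply, Equiv.coe_addRight, doubling_apply,
      zigzag_two_mul_add_one (by omega : r < k + 2 * r + 1),
      zigzag_two_mul (by omega : r ≤ k + 2 * r + 1),
      zigzag_two_mul_add_one hk, zigzag_two_mul hk.le]
    push_cast at h0 ⊢
    rw [Sym2.eq_iff]
    right
    constructor
    · linear_combination -h0
    · linear_combination h0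

theorem neighborSep_member_zero_two {k l : ℕ} (hk : k < m) (hl : l < m) :
    NeighborSep (2 * m + 1) (2 * m + 1) (member 0 l) (member 2 k) := by
  obtain ⟨r, rfl | ⟨rfl, hr⟩⟩ : ∃ r, m = 2 * k + 2 + r ∨ (m = k + 1 + r ∧ r < k + 1) :=
    if h : 2 * (k + 1) ≤ m then ⟨m - 2 * (k + 1), Or.inl (by omega)⟩
    else ⟨m - (k + 1), Or.inr ⟨by omega, by omega⟩⟩
  · refine neighborSep_cutAt (a := ((2 * (2 * k + 1) + 1 : ℕ) : Fin _))
      (b := ((2 * (2 * k + 1 + 1) : ℕ) : Fin _)) (u := ((2 * k + 1 : ℕ) : Fin _))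
      (by push_cast; ring) (by push_cast; ring)
      (Fin.natCast_ne_natCast_of_lt (by omega) (by omega) (by omega)) ?_
    simp only [Equiv.trans_apply, doubling_apply,
      zigzag_two_mul_add_one (by omega : 2 * k + 1 < 2 * k + 2 + r),
      zigzag_two_mul (by omega : 2 * k + 1 + 1 ≤ 2 * k + 2 + r),
      zigzag_two_mul_add_one hk, zigzag_two_mul (by omega : k + 1 ≤ 2 * k + 2 + r)]
    push_cast
    rw [Sym2.eq_iff]
    left
    constructor <;> ring
  · have h0 := Fin.natCast_self (2 * (k + 1 + r) + 1)
    refine neighborSep_cutAt (a := ((2 * (2 * r) + 1 : ℕ) : Fin _))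
      (b := ((2 * (2 * r + 1) : ℕ) : Fin _)) (u := ((2 * k + 1 : ℕ) : Fin _))
      (by push_cast; ring) (by push_cast; ring)
      (Fin.natCast_ne_natCast_of_lt (by omega) (by omega) (by omega)) ?_
    simp only [Equiv.trans_apply, doubling_apply,
      zigzag_two_mul_add_one (by omega : 2 * r < k + 1 + r),
      zigzag_two_mul (by omega : 2 * r + 1 ≤ k + 1 + r),
      zigzag_two_mul_add_one hk, zigzag_two_mul (by omega : k + 1 ≤ k + 1 + r)]
    push_cast at h0 ⊢
    rw [Sym2.eq_iff]
    right
    constructor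
    · linear_combination 2 * h0
    · linear_combination -2 * h0

theorem neighborSep_member_of_ne {i : Fin 3} {k l : ℕ} (hk : k < m) (hl : l < m) (hkl : k ≠ l) :
    NeighborSep (2 * m + 1) (2 * m + 1) (member i k) (member i l) := by
  fin_cases i <;> simp only [member] <;>
    exact neighborSep_cutAt_of_ne _ (Fin.natCast_ne_natCast_of_lt (by omega) (by omega) (by omega))

theorem neighborSep_member {p q : Fin 3 × Fin m} (h : p ≠ q) :
    NeighborSep (2 * m + 1) (2 * m + 1) (member p.1 p.2) (member q.1 q.2) := by
  obtain ⟨i, k, hk⟩ := p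
  obtain ⟨j, l, hl⟩ := q
  by_cases hij : i = j
  · subst hij
    exact neighborSep_member_of_ne hk hl (by rintro rfl; exact h rfl)
  · fin_cases i <;> fin_cases j
    · exact absurd rfl hij
    · exact (neighborSep_member_one_zero hk hl).symm
    · exact neighborSep_member_zero_two hl hk
    · exact neighborSep_member_one_zero hl hk
    · exact absurd rfl hij
    · exact (neighborSep_member_two_one hk hl).symm
    · exact (neighborSep_member_zero_two hk hl).symm
    · exact neighborSep_member_two_one hl hk
    · exact absurd rfl hij

noncomputable def family (m : ℕ) : Finset (Equiv.Perm (Fin (2 * m + 1))) :=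
  Finset.univ.image fun p : Fin 3 × Fin m => member p.1 p.2

theorem card_family : (family m).card = 3 * m := by
  rw [family, Finset.card_image_of_injective, Finset.card_univ, Fintype.card_prod, Fintype.card_fin,
    Fintype.card_fin]
  intro p q hpq
  by_contra h
  have hsep := neighborSep_member h
  simp only at hpq
  rw [hpq] at hsep
  exact NeighborSep.irrefl (k := 2 * m + 1) (by omega) hsep

theorem pairwise_family :
    (family m : Set (Equiv.Perm (Fin (2 * m + 1)))).Pairwise
      (NeighborSep (2 * m + 1) (2 * m + 1)) := by
  rw [family, Finset.coe_image]
  rintro _ ⟨p, -, rfl⟩ _ ⟨q, -, rfl⟩ hpq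
  exact neighborSep_member (fun h => hpq (h ▸ rfl))

end ZigzagFamily

theorem permP_n_n_odd_lower_general (n : ℕ) (hno : Odd n) :
    3 * n / 2 - 1 ≤ permP n n := by
  obtain ⟨m, rfl⟩ := hno
  calc 3 * (2 * m + 1) / 2 - 1 = (ZigzagFamily.family m).card := by
        rw [ZigzagFamily.card_family]; omega
    _ ≤ permP (2 * m + 1) (2 * m + 1) := le_permP ZigzagFamily.pairwise_family

theorem permP_n_n_odd_lower (n : ℕ) (hn : 3 ≤ n) (hno : Odd n) :
    3 * n / 2 - 1 ≤ permP n n :=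
  permP_n_n_odd_lower_general n hno
end

section
/- For every odd integer k ≥ 3 and every integer n ≥ 2, P(n,k) ≤ binom(n, ⌊n/2⌋). -/
/-! Send a permutation to the set of elements it places at even positions, a set of size
`⌈n/2⌉`. If two permutations give the same set, every pair of elements is at distances of the
same parity in both; as `1` and `k - 1` have different parities for odd `k`, the two are not
`k`-neighbor separated. So a pairwise separated family injects into the `⌈n/2⌉`-subsets of
`[n]`. -/

open Finset

lemma card_filter_even_range (n : ℕ) : #{i ∈ range n | Even i} = (n + 1) / 2 := by
  induction n with
  | zero => rfl
  | succ n ih =>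
    rw [range_add_one, filter_insert]
    split_ifs
    · rw [card_insert_of_notMem (by simp), ih]
      grind
    · grind

lemma Fin.card_filter_even_val (n : ℕ) : #{i : Fin n | Even (i : ℕ)} = (n + 1) / 2 := by
  rw [← card_filter_even_range, ← Nat.Iio_eq_range, ← Fin.map_valEmbedding_univ, filter_map,
    card_map]
  rfl

lemma Int.even_natAbs_natCast_sub_iff (a b : ℕ) :
    Even ((a : ℤ) - b).natAbs ↔ (Even a ↔ Even b) := by
  rw [Int.natAbs_even, Int.even_sub, Int.even_coe_nat, Int.even_coe_nat]

namespace Equiv.Perm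

variable {n : ℕ}

def evenPositions (π : Equiv.Perm (Fin n)) : Finset (Fin n) :=
  (univ.filter fun i : Fin n => Even (i : ℕ)).map π.toEmbedding

lemma mem_evenPositions {π : Equiv.Perm (Fin n)} {x : Fin n} :
    x ∈ π.evenPositions ↔ Even (π.symm x : ℕ) := by
  simp [evenPositions, mem_map_equiv]

lemma card_evenPositions (π : Equiv.Perm (Fin n)) : #π.evenPositions = (n + 1) / 2 := by
  rw [evenPositions, card_map, Fin.card_filter_even_val]

lemma not_neighborSep_of_evenPositions_eq {k : ℕ} (hk : Odd k) {π σ : Equiv.Perm (Fin n)}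
    (h : π.evenPositions = σ.evenPositions) : ¬ NeighborSep n k π σ := by
  have hparity : ∀ x : Fin n, Even (π.symm x : ℕ) ↔ Even (σ.symm x : ℕ) := fun x => by
    rw [← mem_evenPositions, ← mem_evenPositions, h]
  have hgap : ∀ x y : Fin n, Even ((π.symm x : ℤ) - (π.symm y : ℤ)).natAbs ↔
      Even ((σ.symm x : ℤ) - (σ.symm y : ℤ)).natAbs := fun x y => by
    rw [Int.even_natAbs_natCast_sub_iff, Int.even_natAbs_natCast_sub_iff, hparity, hparity]
  have hk1 : Even (k - 1) := Nat.Odd.sub_odd hk odd_one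
  rintro ⟨x, y, ⟨h1, hk'⟩ | ⟨h1, hk'⟩⟩
  · exact Nat.not_even_one (h1 ▸ (hgap x y).mpr (hk' ▸ hk1))
  · exact Nat.not_even_one (h1 ▸ (hgap x y).mp (hk' ▸ hk1))

end Equiv.Perm

lemma card_le_choose_half_of_pairwise_neighborSep {n k : ℕ} (hk : Odd k)
    {F : Finset (Equiv.Perm (Fin n))}
    (hF : (F : Set (Equiv.Perm (Fin n))).Pairwise (NeighborSep n k)) :
    #F ≤ n.choose (n / 2) := by
  have hinj : Set.InjOn Equiv.Perm.evenPositions (F : Set (Equiv.Perm (Fin n))) :=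
    fun _ hπ _ hσ h => of_not_not fun hne =>
      Equiv.Perm.not_neighborSep_of_evenPositions_eq hk h (hF hπ hσ hne)
  calc #F = #(F.image Equiv.Perm.evenPositions) := (card_image_of_injOn hinj).symm
    _ ≤ #(powersetCard ((n + 1) / 2) (univ : Finset (Fin n))) := by
        refine card_le_card fun S hS => ?_
        obtain ⟨π, -, rfl⟩ := mem_image.mp hS
        exact mem_powersetCard.mpr ⟨subset_univ _, π.card_evenPositions⟩
    _ = n.choose (n - n / 2) := by
        rw [card_powersetCard, card_univ, Fintype.card_fin]
        congr 1
        omega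
    _ = n.choose (n / 2) := Nat.choose_symm (Nat.div_le_self n 2)

theorem permP_odd_le_central_binom_general (k : ℕ) (hko : Odd k)
    (n : ℕ) :
    permP n k ≤ n.choose (n / 2) := by
  refine csSup_le ⟨0, ∅, by simp, rfl⟩ ?_
  rintro m ⟨F, hF, rfl⟩
  exact card_le_choose_half_of_pairwise_neighborSep hko hF

theorem permP_odd_le_central_binom (k : ℕ) (hk : 3 ≤ k) (hko : Odd k)
    (n : ℕ) (hn : 2 ≤ n) :
    permP n k ≤ n.choose (n / 2) :=
  permP_odd_le_central_binom_general k hko n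
end
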